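/- arXiv:2107.09834 — 6 statements merged into one kernel-verified Lean document; each statement's English description precedes it below -/
import Mathlib

section
/- For matrices A ∈ ℂ^{m_A × n_A} and B ∈ ℂ^{m_B × n_B}, if σ̃_A and σ̃_B denote the rank expansion functions of A and B respectively, then for any k_A ∈ [n_A] and k_B ∈ [n_B], σ̃_C(k_A · k_B) ≤ σ̃_A(k_A) · σ̃_B(k_B), where σ̃_C is the rank expansion of C = A ⊗ B. -/
open Module Submodule Matrix

/-- The rank of a Kronecker product is at most the product of the ranks. -/
lemma rank_kronecker_le {m n p q : Type*} [Fintype m] [Fintype n] [Fintype p] [Fintype q]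
    (A : Matrix m n ℂ) (B : Matrix p q ℂ) :
    (Matrix.kroneckerMap (· * ·) A B).rank ≤ A.rank * B.rank := by
  classical
  rw [Matrix.rank_eq_finrank_span_cols, Matrix.rank_eq_finrank_span_cols,
    Matrix.rank_eq_finrank_span_cols]
  set VA := span ℂ (Set.range Aᵀ) with hVA
  set VB := span ℂ (Set.range Bᵀ) with hVB
  let bA := finBasis ℂ VA
  let bB := finBasis ℂ VB
  set rA := finrank ℂ VA
  set rB := finrank ℂ VB
  let g : Fin rA × Fin rB → (m × p → ℂ) :=
    fun ij x => (bA ij.1 : m → ℂ) x.1 * (bB ij.2 : p → ℂ) x.2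
  have hsub : span ℂ (Set.range (Matrix.kroneckerMap (· * ·) A B)ᵀ) ≤ span ℂ (Set.range g) := by
    rw [span_le]
    rintro _ ⟨⟨a, b⟩, rfl⟩
    have hA : Aᵀ a ∈ VA := subset_span ⟨a, rfl⟩
    have hB : Bᵀ b ∈ VB := subset_span ⟨b, rfl⟩
    have hspanA : span ℂ (Set.range (fun i => (bA i : m → ℂ))) = VA := by
      rw [show (fun i => (bA i : m → ℂ)) = VA.subtype ∘ bA from rfl, Set.range_comp,
        Submodule.span_image, bA.span_eq, Submodule.map_top, Submodule.range_subtype]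
    have hspanB : span ℂ (Set.range (fun i => (bB i : p → ℂ))) = VB := by
      rw [show (fun i => (bB i : p → ℂ)) = VB.subtype ∘ bB from rfl, Set.range_comp,
        Submodule.span_image, bB.span_eq, Submodule.map_top, Submodule.range_subtype]
    obtain ⟨cA, hcA⟩ := (mem_span_range_iff_exists_fun ℂ).mp (hspanA ▸ hA)
    obtain ⟨cB, hcB⟩ := (mem_span_range_iff_exists_fun ℂ).mp (hspanB ▸ hB)
    have : (Matrix.kroneckerMap (· * ·) A B)ᵀ (a, b) =
        ∑ ij : Fin rA × Fin rB, (cA ij.1 * cB ij.2) • g ij := by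
      funext x
      have h1 : A x.1 a = ∑ i, cA i * (bA i : m → ℂ) x.1 := by
        have := congrFun hcA x.1
        simpa [Matrix.transpose_apply] using this.symm
      have h2 : B x.2 b = ∑ j, cB j * (bB j : p → ℂ) x.2 := by
        have := congrFun hcB x.2
        simpa [Matrix.transpose_apply] using this.symm
      simp only [Matrix.transpose_apply, Matrix.kroneckerMap_apply, h1, h2,
        Finset.sum_apply, Pi.smul_apply, smul_eq_mul]
      rw [Finset.sum_mul_sum, ← Finset.sum_product']
      simp [g, Finset.univ_product_univ]
      ring_nf
      exact Finset.sum_congr rfl fun ij _ => by ring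
    rw [this]
    exact Submodule.sum_mem _ fun ij _ => Submodule.smul_mem _ _ (subset_span ⟨ij, rfl⟩)
  calc finrank ℂ (span ℂ (Set.range (Matrix.kroneckerMap (· * ·) A B)ᵀ))
      ≤ finrank ℂ (span ℂ (Set.range g)) := Submodule.finrank_mono hsub
    _ ≤ Fintype.card (Fin rA × Fin rB) := finrank_range_le_card g
    _ = rA * rB := by simp

/-- Reindexing the columns by an equivalence preserves the rank. -/
lemma rank_submatrix_id_equiv {m n o : Type*} [Fintype m] [Fintype n] [Fintype o]
    (M : Matrix m n ℂ) (e : o ≃ n) : (M.submatrix id e).rank = M.rank := by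
  have h : Set.range (M.submatrix id ⇑e)ᵀ = Set.range Mᵀ := by
    ext x
    constructor
    · rintro ⟨j, rfl⟩
      exact ⟨e j, rfl⟩
    · rintro ⟨i, rfl⟩
      exact ⟨e.symm i, by funext k; simp⟩
  rw [Matrix.rank_eq_finrank_span_cols, Matrix.rank_eq_finrank_span_cols]
  exact congrArg (fun s => finrank ℂ (span ℂ s)) h

/-- The rank expansion of a matrix: the minimum rank over all `k`-column submatrices. -/
noncomputable def rankExpansion {m n : Type*} [Fintype m] [Fintype n]
    (M : Matrix m n ℂ) (k : ℕ) : ℕ :=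
  sInf {r | ∃ S : Finset n, S.card = k ∧
    (M.submatrix id (Subtype.val : {j // j ∈ S} → n)).rank = r}

lemma rankExpansion_mem {m n : Type*} [Fintype m] [Fintype n]
    (M : Matrix m n ℂ) (k : ℕ) (hk : k ≤ Fintype.card n) :
    ∃ S : Finset n, S.card = k ∧
      (M.submatrix id (Subtype.val : {j // j ∈ S} → n)).rank = rankExpansion M k := by
  have hne : {r | ∃ S : Finset n, S.card = k ∧
      (M.submatrix id (Subtype.val : {j // j ∈ S} → n)).rank = r}.Nonempty := by
    obtain ⟨S, _, hS⟩ := Finset.exists_subset_card_eq (le_of_le_of_eq hk (Finset.card_univ).symm)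
    exact ⟨_, S, hS, rfl⟩
  exact Nat.sInf_mem hne

theorem stmt2 {mA nA mB nB : ℕ}
    (A : Matrix (Fin mA) (Fin nA) ℂ) (B : Matrix (Fin mB) (Fin nB) ℂ)
    (kA kB : ℕ) (hkA : kA ∈ Finset.Icc 1 nA) (hkB : kB ∈ Finset.Icc 1 nB) :
    rankExpansion (Matrix.kroneckerMap (· * ·) A B) (kA * kB) ≤
      rankExpansion A kA * rankExpansion B kB := by
  classical
  obtain ⟨-, hkA2⟩ := Finset.mem_Icc.mp hkA
  obtain ⟨-, hkB2⟩ := Finset.mem_Icc.mp hkB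
  obtain ⟨SA, hSAcard, hSArank⟩ := rankExpansion_mem A kA (by simpa using hkA2)
  obtain ⟨SB, hSBcard, hSBrank⟩ := rankExpansion_mem B kB (by simpa using hkB2)
  set S : Finset (Fin nA × Fin nB) := SA ×ˢ SB with hS
  have hcard : S.card = kA * kB := by rw [hS, Finset.card_product, hSAcard, hSBcard]
  -- the submatrix on S equals a column-permuted Kronecker product of the two submatrices
  let e : {j // j ∈ S} ≃ {a // a ∈ SA} × {b // b ∈ SB} :=
    { toFun := fun j => (⟨j.1.1, (Finset.mem_product.mp j.2).1⟩,
        ⟨j.1.2, (Finset.mem_product.mp j.2).2⟩)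
      invFun := fun p => ⟨(p.1.1, p.2.1), Finset.mem_product.mpr ⟨p.1.2, p.2.2⟩⟩
      left_inv := fun j => rfl
      right_inv := fun p => rfl }
  have key : ((Matrix.kroneckerMap (· * ·) A B).submatrix id
      (Subtype.val : {j // j ∈ S} → Fin nA × Fin nB)) =
      (Matrix.kroneckerMap (· * ·)
        (A.submatrix id (Subtype.val : {a // a ∈ SA} → Fin nA))
        (B.submatrix id (Subtype.val : {b // b ∈ SB} → Fin nB))).submatrix id e := by
    ext i j
    rfl
  have hrank : ((Matrix.kroneckerMap (· * ·) A B).submatrix id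
      (Subtype.val : {j // j ∈ S} → Fin nA × Fin nB)).rank ≤
      rankExpansion A kA * rankExpansion B kB := by
    rw [key, rank_submatrix_id_equiv, ← hSArank, ← hSBrank]
    exact rank_kronecker_le _ _
  calc rankExpansion (Matrix.kroneckerMap (· * ·) A B) (kA * kB)
      ≤ ((Matrix.kroneckerMap (· * ·) A B).submatrix id
        (Subtype.val : {j // j ∈ S} → Fin nA × Fin nB)).rank :=
        Nat.sInf_le ⟨S, hcard, rfl⟩
    _ ≤ _ := hrank
end

section
/- Let f, g : ℝ_{>0} → ℝ_{>0} be increasing log-log concave functions, and let a, b, c, d, k be positive reals with a ≤ b and c ≤ d. Then the minimum of f(k_A)·g(k_B) over k_A ∈ [a,b], k_B ∈ [c,d] with k_A·k_B ≥ k is attained at a point where k_A ∈ {a, b} or k_B ∈ {c, d}. -/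
/-- `f` is log-log concave: `x ↦ log (f (exp x))` is concave on `ℝ`. -/
def LogLogConcave (f : ℝ → ℝ) : Prop :=
  ConcaveOn ℝ Set.univ (fun x => Real.log (f (Real.exp x)))

theorem stmt3 (f g : ℝ → ℝ)
    (hfpos : ∀ x > (0:ℝ), 0 < f x) (hgpos : ∀ x > (0:ℝ), 0 < g x)
    (hfmono : MonotoneOn f (Set.Ioi 0)) (hgmono : MonotoneOn g (Set.Ioi 0))
    (hf : LogLogConcave f) (hg : LogLogConcave g)
    (a b c d k : ℝ) (ha : 0 < a) (hc : 0 < c) (hk : 0 < k)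
    (hab : a ≤ b) (hcd : c ≤ d) (hfeas : k ≤ b * d) :
    ∃ kA kB : ℝ, kA ∈ Set.Icc a b ∧ kB ∈ Set.Icc c d ∧ k ≤ kA * kB ∧
      (kA = a ∨ kA = b ∨ kB = c ∨ kB = d) ∧
      ∀ kA' ∈ Set.Icc a b, ∀ kB' ∈ Set.Icc c d, k ≤ kA' * kB' →
        f kA * g kB ≤ f kA' * g kB' := by
  have hb : 0 < b := lt_of_lt_of_le ha hab
  have hd : 0 < d := lt_of_lt_of_le hc hcd
  by_cases hkac : k ≤ a * c
  · refine ⟨a, c, ⟨le_refl a, hab⟩, ⟨le_refl c, hcd⟩, hkac, Or.inl rfl, ?_⟩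
    intro kA' hA' kB' hB' _
    have hA'pos : (0:ℝ) < kA' := lt_of_lt_of_le ha hA'.1
    have hB'pos : (0:ℝ) < kB' := lt_of_lt_of_le hc hB'.1
    exact mul_le_mul (hfmono ha hA'pos hA'.1) (hgmono hc hB'pos hB'.1)
      (le_of_lt (hgpos c hc)) (le_of_lt (hfpos kA' hA'pos))
  · push_neg at hkac
    set L := max a (k / d) with hLdef
    set R := min b (k / c) with hRdef
    have hkd : k / d ≤ b := by rw [div_le_iff₀ hd]; exact hfeas
    have hak : a < k / c := by rw [lt_div_iff₀ hc]; exact hkac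
    have hL : 0 < L := lt_of_lt_of_le ha (le_max_left _ _)
    have hLa : a ≤ L := le_max_left _ _
    have hLb : L ≤ b := max_le hab hkd
    have hLkc : L ≤ k / c := max_le (le_of_lt hak) (by
      apply div_le_div_of_nonneg_left (le_of_lt hk) hc hcd)
    have hLR : L ≤ R := le_min hLb hLkc
    have hR : 0 < R := lt_of_lt_of_le hL hLR
    have hRb : R ≤ b := min_le_left _ _
    have haR : a ≤ R := le_trans hLa hLR
    have hRkc : R ≤ k / c := min_le_right _ _
    -- k/L and k/R lie in [c,d]
    have hkLd : k / L ≤ d := by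
      rw [div_le_iff₀ hL]
      rw [hLdef]
      calc k = (k / d) * d := by field_simp
        _ ≤ max a (k / d) * d := by
            apply mul_le_mul_of_nonneg_right (le_max_right _ _) (le_of_lt hd)
        _ = d * max a (k / d) := mul_comm _ _
    have hckL : c ≤ k / L := by
      rw [le_div_iff₀ hL]
      calc c * L ≤ c * (k / c) := by
            apply mul_le_mul_of_nonneg_left hLkc (le_of_lt hc)
        _ = k := by field_simp
    have hckR : c ≤ k / R := by
      rw [le_div_iff₀ hR]
      calc c * R ≤ c * (k / c) := by
            apply mul_le_mul_of_nonneg_left hRkc (le_of_lt hc)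
        _ = k := by field_simp
    have hkRd : k / R ≤ d :=
      le_trans (div_le_div_of_nonneg_left (le_of_lt hk) hL hLR) hkLd
    have hkL : 0 < k / L := lt_of_lt_of_le hc hckL
    have hkR : 0 < k / R := lt_of_lt_of_le hc hckR
    have hmulL : L * (k / L) = k := by field_simp
    have hmulR : R * (k / R) = k := by field_simp
    -- concavity of t ↦ log f(e^t) + log g(e^(log k - t))
    have hφ : ConcaveOn ℝ Set.univ
        (fun t => Real.log (f (Real.exp t)) + Real.log (g (Real.exp (Real.log k - t)))) := by
      apply hf.add
      have h2 := hg.comp_affineMap (AffineMap.lineMap (Real.log k) (Real.log k - 1))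
      have heq : ((fun x => Real.log (g (Real.exp x))) ∘
          (AffineMap.lineMap (Real.log k) (Real.log k - 1) : ℝ →ᵃ[ℝ] ℝ))
          = fun t => Real.log (g (Real.exp (Real.log k - t))) := by
        funext t
        simp [AffineMap.lineMap_apply]
        ring_nf
      rw [heq] at h2
      simpa using h2
    -- key: min of endpoint values bounds values on the curve
    have key : ∀ x, L ≤ x → x ≤ R →
        min (f L * g (k / L)) (f R * g (k / R)) ≤ f x * g (k / x) := by
      intro x hx1 hx2
      have hx : 0 < x := lt_of_lt_of_le hL hx1
      have hkx : 0 < k / x := div_pos hk hx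
      have hseg : Real.log x ∈ segment ℝ (Real.log L) (Real.log R) := by
        rw [segment_eq_Icc (Real.log_le_log hL hLR)]
        exact ⟨Real.log_le_log hL hx1, Real.log_le_log hx hx2⟩
      have := hφ.ge_on_segment (Set.mem_univ (Real.log L)) (Set.mem_univ (Real.log R)) hseg
      have hval : ∀ y : ℝ, 0 < y →
          Real.log (f (Real.exp (Real.log y))) +
            Real.log (g (Real.exp (Real.log k - Real.log y)))
          = Real.log (f y * g (k / y)) := by
        intro y hy
        rw [Real.exp_log hy, ← Real.log_div (ne_of_gt hk) (ne_of_gt hy),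
          Real.exp_log (div_pos hk hy),
          Real.log_mul (ne_of_gt (hfpos y hy)) (ne_of_gt (hgpos _ (div_pos hk hy)))]
      rw [hval L hL, hval R hR, hval x hx] at this
      have hfgL : 0 < f L * g (k / L) := mul_pos (hfpos L hL) (hgpos _ hkL)
      have hfgR : 0 < f R * g (k / R) := mul_pos (hfpos R hR) (hgpos _ hkR)
      have hfgx : 0 < f x * g (k / x) := mul_pos (hfpos x hx) (hgpos _ hkx)
      rcases min_le_iff.mp this with h | h
      · exact le_trans (min_le_left _ _) ((Real.log_le_log_iff hfgL hfgx).mp h)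
      · exact le_trans (min_le_right _ _) ((Real.log_le_log_iff hfgR hfgx).mp h)
    -- any feasible point is ≥ the min of the two endpoint values
    have main : ∀ kA' ∈ Set.Icc a b, ∀ kB' ∈ Set.Icc c d, k ≤ kA' * kB' →
        min (f L * g (k / L)) (f R * g (k / R)) ≤ f kA' * g kB' := by
      intro kA' hA' kB' hB' hk'
      have hA'pos : (0:ℝ) < kA' := lt_of_lt_of_le ha hA'.1
      have hB'pos : (0:ℝ) < kB' := lt_of_lt_of_le hc hB'.1
      by_cases hcase : k ≤ kA' * c
      · -- compare with (R, k/R)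
        have hRA' : R ≤ kA' := le_trans hRkc (by rw [div_le_iff₀ hc]; exact hcase)
        have hkRB' : k / R ≤ kB' := by
          rcases min_choice b (k / c) with hm | hm
          · rw [hRdef, hm, div_le_iff₀ hb]
            calc k ≤ kA' * kB' := hk'
              _ ≤ b * kB' := mul_le_mul_of_nonneg_right hA'.2 (le_of_lt hB'pos)
              _ = kB' * b := mul_comm _ _
          · rw [hRdef, hm, div_div_cancel₀ (ne_of_gt hk)] at *
            exact hB'.1
        refine le_trans (min_le_right _ _) ?_
        exact mul_le_mul (hfmono hR hA'pos hRA') (hgmono hkR hB'pos hkRB')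
          (le_of_lt (hgpos _ hkR)) (le_of_lt (hfpos kA' hA'pos))
      · -- on the curve: kA' ∈ [L, R]
        push_neg at hcase
        have hA'R : kA' ≤ R := le_min hA'.2 (by rw [le_div_iff₀ hc]; exact le_of_lt hcase)
        have hLA' : L ≤ kA' := max_le hA'.1 (by
          rw [div_le_iff₀ hd]
          calc k ≤ kA' * kB' := hk'
            _ ≤ kA' * d := mul_le_mul_of_nonneg_left hB'.2 (le_of_lt hA'pos))
        have hkA'B' : k / kA' ≤ kB' := by rw [div_le_iff₀ hA'pos]; linarith [hk', mul_comm kA' kB']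
        have hkakpos : 0 < k / kA' := div_pos hk hA'pos
        refine le_trans (key kA' hLA' hA'R) ?_
        exact mul_le_mul_of_nonneg_left (hgmono hkakpos hB'pos hkA'B')
          (le_of_lt (hfpos kA' hA'pos)) |>.trans_eq rfl
    -- pick the better endpoint
    have hLend : L = a ∨ k / L = d := by
      rcases max_choice a (k / d) with hm | hm
      · exact Or.inl hm
      · right; rw [hLdef, hm, div_div_cancel₀ (ne_of_gt hk)]
    have hRend : R = b ∨ k / R = c := by
      rcases min_choice b (k / c) with hm | hm
      · exact Or.inl hm
      · right; rw [hRdef, hm, div_div_cancel₀ (ne_of_gt hk)]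
    rcases le_total (f L * g (k / L)) (f R * g (k / R)) with hmin | hmin
    · refine ⟨L, k / L, ⟨hLa, hLb⟩, ⟨hckL, hkLd⟩, le_of_eq hmulL.symm, ?_, ?_⟩
      · rcases hLend with h | h
        · exact Or.inl h
        · exact Or.inr (Or.inr (Or.inr h))
      · intro kA' hA' kB' hB' hk'
        have := main kA' hA' kB' hB' hk'
        rwa [min_eq_left hmin] at this
    · refine ⟨R, k / R, ⟨haR, hRb⟩, ⟨hckR, hkRd⟩, le_of_eq hmulR.symm, ?_, ?_⟩
      · rcases hRend with h | h
        · exact Or.inr (Or.inl h)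
        · exact Or.inr (Or.inr (Or.inl h))
      · intro kA' hA' kB' hB' hk'
        have := main kA' hA' kB' hB' hk'
        rwa [min_eq_right hmin] at this
end

section
/- For any a > 0 and b > 0, the function f(x) = a·ln(b·x + 1) on ℝ_{>0} is concave and log-log concave, and for any t > 0, the function x ↦ f(t) − f(t − x) is log-log convex on (0, t). -/
open Real Set

-- K(u) = (u+1) log(u+1) / u is monotone on (0, ∞)
lemma Kmono : MonotoneOn (fun u : ℝ => (u+1) * Real.log (u+1) / u) (Set.Ioi 0) := by
  have hderiv : ∀ u ∈ Set.Ioi (0:ℝ), HasDerivAt (fun u : ℝ => (u+1) * Real.log (u+1) / u)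
      (((1 * Real.log (u+1) + (u+1) * (1/(u+1))) * u - (u+1) * Real.log (u+1) * 1) / u ^ 2) u := by
    intro u hu
    have hu0 : (0:ℝ) < u := hu
    have h1 : HasDerivAt (fun u : ℝ => u + 1) 1 u := (hasDerivAt_id u).add_const 1
    have h2 : HasDerivAt (fun u : ℝ => Real.log (u+1)) (1/(u+1)) u := by
      simpa using h1.log (by positivity)
    exact (h1.mul h2).div (hasDerivAt_id u) hu0.ne'
  apply monotoneOn_of_deriv_nonneg (convex_Ioi 0)
  · exact fun u hu => ((hderiv u hu).differentiableAt).continuousAt.continuousWithinAt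
  · intro u hu
    rw [interior_Ioi] at hu
    exact ((hderiv u hu).differentiableAt).differentiableWithinAt
  · intro u hu
    rw [interior_Ioi] at hu
    have hu0 : (0:ℝ) < u := hu
    rw [(hderiv u hu).deriv]
    apply div_nonneg _ (by positivity)
    have h5 : (u+1) * (1/(u+1)) = 1 := by field_simp
    have key : Real.log (u+1) ≤ u := by
      have := Real.log_le_sub_one_of_pos (show (0:ℝ) < u+1 by linarith)
      linarith
    rw [h5]; nlinarith

-- H(u) = u / ((u+1) log(u+1)) is antitone on (0, ∞)
lemma Hanti : AntitoneOn (fun u : ℝ => u / ((u+1) * Real.log (u+1))) (Set.Ioi 0) := by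
  intro u hu v hv huv
  have hu0 : (0:ℝ) < u := hu
  have hv0 : (0:ℝ) < v := hv
  have hlu : 0 < Real.log (u+1) := Real.log_pos (by linarith)
  have hlv : 0 < Real.log (v+1) := Real.log_pos (by linarith)
  have hK := Kmono hu hv huv
  simp only at hK
  rw [div_le_div_iff₀ (by positivity) (by positivity)] at hK ⊢
  nlinarith

lemma part2 (a b : ℝ) (ha : 0 < a) (hb : 0 < b) :
    ConcaveOn ℝ Set.univ (fun x => Real.log (a * Real.log (b * Real.exp x + 1))) := by
  have hpos : ∀ x : ℝ, (0:ℝ) < b * Real.exp x + 1 := fun x => by positivity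
  have hlpos : ∀ x : ℝ, 0 < Real.log (b * Real.exp x + 1) := fun x =>
    Real.log_pos (by nlinarith [Real.exp_pos x])
  have hderiv : ∀ x : ℝ, HasDerivAt (fun x => Real.log (a * Real.log (b * Real.exp x + 1)))
      (b * Real.exp x / ((b * Real.exp x + 1) * Real.log (b * Real.exp x + 1))) x := by
    intro x
    have h1 : HasDerivAt (fun x : ℝ => b * Real.exp x + 1) (b * Real.exp x) x :=
      ((Real.hasDerivAt_exp x).const_mul b).add_const 1
    have h2 : HasDerivAt (fun x : ℝ => Real.log (b * Real.exp x + 1))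
        (b * Real.exp x / (b * Real.exp x + 1)) x := h1.log (hpos x).ne'
    have h3 := (h2.const_mul a).log
      (mul_pos ha (hlpos x)).ne'
    convert h3 using 1
    rw [mul_div_assoc, mul_div_mul_left _ _ ha.ne', div_div, mul_div_assoc]
  apply AntitoneOn.concaveOn_of_deriv convex_univ
  · exact fun x _ => (hderiv x).differentiableAt.continuousAt.continuousWithinAt
  · intro x _
    exact (hderiv x).differentiableAt.differentiableWithinAt
  · intro x _ y _ hxy
    rw [(hderiv x).deriv, (hderiv y).deriv]
    exact Hanti (by positivity : (0:ℝ) < b * Real.exp x)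
      (by positivity : (0:ℝ) < b * Real.exp y)
      (by nlinarith [Real.exp_le_exp.mpr hxy, Real.exp_pos x])

lemma Danti (b t : ℝ) (hb : 0 < b) (ht : 0 < t) :
    AntitoneOn (fun s : ℝ => (b*(t-s)+1) * (Real.log (b*t+1) - Real.log (b*(t-s)+1)) / s)
      (Set.Ioo 0 t) := by
  have hderiv : ∀ s ∈ Set.Ioo (0:ℝ) t,
      HasDerivAt (fun s : ℝ => (b*(t-s)+1) * (Real.log (b*t+1) - Real.log (b*(t-s)+1)) / s)
        ((((b * -1) * (Real.log (b*t+1) - Real.log (b*(t-s)+1)) +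
          (b*(t-s)+1) * (-(b * -1 / (b*(t-s)+1)))) * s
          - (b*(t-s)+1) * (Real.log (b*t+1) - Real.log (b*(t-s)+1)) * 1) / s ^ 2) s := by
    intro s hs
    have hp : (0:ℝ) < b*(t-s)+1 := by nlinarith [hs.2]
    have h1 : HasDerivAt (fun s : ℝ => b*(t-s)+1) (b * -1) s :=
      (((hasDerivAt_id s).const_sub t).const_mul b).add_const 1
    have h2 : HasDerivAt (fun s : ℝ => Real.log (b*(t-s)+1)) (b * -1 / (b*(t-s)+1)) s :=
      h1.log hp.ne'
    exact (h1.mul (h2.const_sub (Real.log (b*t+1)))).div (hasDerivAt_id s) hs.1.ne'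
  apply antitoneOn_of_deriv_nonpos (convex_Ioo 0 t)
  · exact fun s hs => ((hderiv s hs).differentiableAt).continuousAt.continuousWithinAt
  · intro s hs
    rw [interior_Ioo] at hs
    exact ((hderiv s hs).differentiableAt).differentiableWithinAt
  · intro s hs
    rw [interior_Ioo] at hs
    rw [(hderiv s hs).deriv]
    obtain ⟨hs0, hst⟩ := hs
    have hp : (0:ℝ) < b*(t-s)+1 := by nlinarith
    have hA : (0:ℝ) < b*t+1 := by nlinarith
    have hplt : b*(t-s)+1 < b*t+1 := by nlinarith
    have hq : 0 < Real.log (b*t+1) - Real.log (b*(t-s)+1) :=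
      sub_pos.mpr (Real.log_lt_log hp hplt)
    apply div_nonpos_of_nonpos_of_nonneg _ (by positivity)
    have hcancel : (b*(t-s)+1) * (-(b * -1 / (b*(t-s)+1))) = b := by field_simp
    rw [hcancel]
    -- key inequality: q ≥ b*s/(b*t+1), i.e. q*(b*t+1) ≥ b*s
    have hkey : b * s ≤ (Real.log (b*t+1) - Real.log (b*(t-s)+1)) * (b*t+1) := by
      have hylog : Real.log ((b*(t-s)+1)/(b*t+1)) ≤ (b*(t-s)+1)/(b*t+1) - 1 :=
        Real.log_le_sub_one_of_pos (by positivity)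
      rw [Real.log_div hp.ne' hA.ne'] at hylog
      rw [div_sub_one hA.ne', le_div_iff₀ hA] at hylog
      nlinarith
    nlinarith

lemma Gmono (b t : ℝ) (hb : 0 < b) (ht : 0 < t) :
    MonotoneOn (fun s : ℝ => b * s / ((b*(t-s)+1) * (Real.log (b*t+1) - Real.log (b*(t-s)+1))))
      (Set.Ioo 0 t) := by
  intro u hu v hv huv
  have hpu : (0:ℝ) < b*(t-u)+1 := by nlinarith [hu.2]
  have hpv : (0:ℝ) < b*(t-v)+1 := by nlinarith [hv.2]
  have hA : (0:ℝ) < b*t+1 := by nlinarith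
  have hqu : 0 < Real.log (b*t+1) - Real.log (b*(t-u)+1) :=
    sub_pos.mpr (Real.log_lt_log hpu (by nlinarith [hu.1]))
  have hqv : 0 < Real.log (b*t+1) - Real.log (b*(t-v)+1) :=
    sub_pos.mpr (Real.log_lt_log hpv (by nlinarith [hv.1]))
  have hD := Danti b t hb ht hu hv huv
  simp only at hD
  rw [div_le_div_iff₀ hv.1 hu.1] at hD
  rw [div_le_div_iff₀ (by positivity) (by positivity)]
  nlinarith [hu.1, hv.1]

lemma part3 (a b : ℝ) (ha : 0 < a) (hb : 0 < b) (t : ℝ) (ht : 0 < t) :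
    ConvexOn ℝ (Set.Iio (Real.log t))
      (fun x => Real.log
        (a * Real.log (b * t + 1) - a * Real.log (b * (t - Real.exp x) + 1))) := by
  have hexp : ∀ x ∈ Set.Iio (Real.log t), Real.exp x ∈ Set.Ioo (0:ℝ) t := by
    intro x hx
    exact ⟨Real.exp_pos x, by
      have := Real.exp_lt_exp.mpr (show x < Real.log t from hx)
      rwa [Real.exp_log ht] at this⟩
  have hderiv : ∀ x ∈ Set.Iio (Real.log t),
      HasDerivAt (fun x => Real.log
          (a * Real.log (b * t + 1) - a * Real.log (b * (t - Real.exp x) + 1)))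
        (b * Real.exp x / ((b*(t-Real.exp x)+1) *
          (Real.log (b*t+1) - Real.log (b*(t-Real.exp x)+1)))) x := by
    intro x hx
    obtain ⟨he0, het⟩ := hexp x hx
    have hp : (0:ℝ) < b*(t-Real.exp x)+1 := by nlinarith
    have hA : (0:ℝ) < b*t+1 := by nlinarith
    have hq : 0 < Real.log (b*t+1) - Real.log (b*(t-Real.exp x)+1) :=
      sub_pos.mpr (Real.log_lt_log hp (by nlinarith))
    have h1 : HasDerivAt (fun x : ℝ => b*(t-Real.exp x)+1) (b * -Real.exp x) x :=
      (((Real.hasDerivAt_exp x).const_sub t).const_mul b).add_const 1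
    have h2 : HasDerivAt (fun x : ℝ => Real.log (b*(t-Real.exp x)+1))
        (b * -Real.exp x / (b*(t-Real.exp x)+1)) x := h1.log hp.ne'
    have h3 : HasDerivAt (fun x : ℝ =>
        a * Real.log (b*t+1) - a * Real.log (b*(t-Real.exp x)+1))
        (-(a * (b * -Real.exp x / (b*(t-Real.exp x)+1)))) x :=
      (h2.const_mul a).const_sub (a * Real.log (b*t+1))
    have hW : (0:ℝ) < a * Real.log (b*t+1) - a * Real.log (b*(t-Real.exp x)+1) := by
      nlinarith
    have h4 := h3.log hW.ne'
    convert h4 using 1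
    field_simp
  apply MonotoneOn.convexOn_of_deriv (convex_Iio _)
  · exact fun x hx => ((hderiv x hx).differentiableAt).continuousAt.continuousWithinAt
  · intro x hx
    rw [interior_Iio] at hx
    exact ((hderiv x hx).differentiableAt).differentiableWithinAt
  · intro x hx y hy hxy
    rw [interior_Iio] at hx hy
    rw [(hderiv x hx).deriv, (hderiv y hy).deriv]
    exact Gmono b t hb ht (hexp x hx) (hexp y hy) (Real.exp_le_exp.mpr hxy)

theorem stmt6 (a b : ℝ) (ha : 0 < a) (hb : 0 < b) :
    ConcaveOn ℝ (Set.Ioi 0) (fun x => a * Real.log (b * x + 1)) ∧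
    ConcaveOn ℝ Set.univ (fun x => Real.log (a * Real.log (b * Real.exp x + 1))) ∧
    ∀ t > (0:ℝ), ConvexOn ℝ (Set.Iio (Real.log t))
      (fun x => Real.log
        (a * Real.log (b * t + 1) - a * Real.log (b * (t - Real.exp x) + 1))) := by
  refine ⟨?_, part2 a b ha hb, fun t ht => part3 a b ha hb t ht⟩
  have hderiv : ∀ x ∈ Set.Ioi (0:ℝ),
      HasDerivAt (fun x => a * Real.log (b * x + 1)) (a * (b * 1 / (b * x + 1))) x := by
    intro x hx
    have hp : (0:ℝ) < b * x + 1 := by nlinarith [Set.mem_Ioi.mp hx]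
    have h1 : HasDerivAt (fun x : ℝ => b * x + 1) (b * 1) x :=
      ((hasDerivAt_id x).const_mul b).add_const 1
    exact (h1.log hp.ne').const_mul a
  apply AntitoneOn.concaveOn_of_deriv (convex_Ioi 0)
  · exact fun x hx => ((hderiv x hx).differentiableAt).continuousAt.continuousWithinAt
  · intro x hx
    rw [interior_Ioi] at hx
    exact ((hderiv x hx).differentiableAt).differentiableWithinAt
  · intro x hx y hy hxy
    rw [interior_Ioi] at hx hy
    rw [(hderiv x hx).deriv, (hderiv y hy).deriv]
    have hx0 : (0:ℝ) < x := hx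
    have hy0 : (0:ℝ) < y := hy
    have h1 : (0:ℝ) < b * x + 1 := by nlinarith
    have h2 : b * x + 1 ≤ b * y + 1 := by nlinarith
    gcongr
end

section
/- The function f(x) = x·ln(1 + x) is convex on ℝ_{>0} and log-log concave on ℝ_{>0}. -/
open Real

private lemma hL (x : ℝ) :
    HasDerivAt (fun x : ℝ => Real.log (1 + Real.exp x))
      (Real.exp x / (1 + Real.exp x)) x := by
  have h1 : HasDerivAt (fun x : ℝ => 1 + Real.exp x) (Real.exp x) x :=
    (Real.hasDerivAt_exp x).const_add 1
  have hne : (1 : ℝ) + Real.exp x ≠ 0 := by positivity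
  exact ((Real.hasDerivAt_log hne).comp x h1).congr_deriv (div_eq_inv_mul _ _).symm

theorem stmt8 :
    ConvexOn ℝ (Set.Ioi 0) (fun x : ℝ => x * Real.log (1 + x)) ∧
    ConcaveOn ℝ Set.univ
      (fun x => Real.log (Real.exp x * Real.log (1 + Real.exp x))) := by
  constructor
  · -- convexity of x * log (1+x) on Ioi 0
    apply convexOn_of_hasDerivWithinAt2_nonneg (f' := fun x => Real.log (1 + x) + x / (1 + x))
      (f'' := fun x => 1 / (1 + x) + 1 / (1 + x) ^ 2) (convex_Ioi 0)
    · apply ContinuousOn.mul continuousOn_id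
      intro x hx
      have hx : (0:ℝ) < x := hx
      exact (Real.continuousAt_log (by positivity)).comp
        (by fun_prop) |>.continuousWithinAt
    · intro x hx
      rw [interior_Ioi] at hx
      have hx : (0:ℝ) < x := hx
      have hne : (1:ℝ) + x ≠ 0 := by positivity
      have h1 : HasDerivAt (fun x : ℝ => Real.log (1 + x)) (1 / (1 + x)) x := by
        have := (Real.hasDerivAt_log hne).comp x ((hasDerivAt_id x).const_add 1)
        exact this.congr_deriv (by simp)
      have := (hasDerivAt_id x).mul h1
      have h2 : HasDerivAt (fun x : ℝ => x * Real.log (1 + x))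
          (Real.log (1 + x) + x / (1 + x)) x := by
        refine this.congr_deriv (Eq.symm ?_)
        field_simp
        rfl
      exact h2.hasDerivWithinAt
    · intro x hx
      rw [interior_Ioi] at hx
      have hx : (0:ℝ) < x := hx
      have hne : (1:ℝ) + x ≠ 0 := by positivity
      have h1 : HasDerivAt (fun x : ℝ => Real.log (1 + x)) (1 / (1 + x)) x := by
        have := (Real.hasDerivAt_log hne).comp x ((hasDerivAt_id x).const_add 1)
        exact this.congr_deriv (by simp)
      have h2 : HasDerivAt (fun x : ℝ => x / (1 + x))
          ((1 * (1 + x) - x * 1) / (1 + x) ^ 2) x :=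
        (hasDerivAt_id x).div ((hasDerivAt_id x).const_add 1) hne
      have h3 := h1.add h2
      have h4 : HasDerivAt (fun x : ℝ => Real.log (1 + x) + x / (1 + x))
          (1 / (1 + x) + 1 / (1 + x) ^ 2) x := by
        refine h3.congr_deriv (Eq.symm ?_)
        ring
      exact h4.hasDerivWithinAt
    · intro x hx
      rw [interior_Ioi] at hx
      have hx : (0:ℝ) < x := hx
      positivity
  · -- concavity of log (exp x * log (1 + exp x)) on univ
    apply concaveOn_of_hasDerivWithinAt2_nonpos
      (f' := fun x => 1 + Real.exp x / ((1 + Real.exp x) * Real.log (1 + Real.exp x)))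
      (f'' := fun x => (Real.exp x * ((1 + Real.exp x) * Real.log (1 + Real.exp x)) -
          Real.exp x * (Real.exp x * Real.log (1 + Real.exp x) + Real.exp x)) /
          ((1 + Real.exp x) * Real.log (1 + Real.exp x)) ^ 2)
      convex_univ
    · -- continuity
      intro x _
      have he : (0:ℝ) < Real.exp x := Real.exp_pos x
      have hLpos : 0 < Real.log (1 + Real.exp x) :=
        Real.log_pos (by linarith)
      have : ContinuousAt (fun x => Real.log (Real.exp x * Real.log (1 + Real.exp x))) x := by
        apply (Real.continuousAt_log (by positivity)).comp
        apply ContinuousAt.mul Real.continuous_exp.continuousAt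
        exact (Real.continuousAt_log (by positivity)).comp (by fun_prop)
      exact this.continuousWithinAt
    · intro x _
      have he : (0:ℝ) < Real.exp x := Real.exp_pos x
      have hLpos : 0 < Real.log (1 + Real.exp x) := Real.log_pos (by linarith)
      have hprod : HasDerivAt (fun x : ℝ => Real.exp x * Real.log (1 + Real.exp x))
          (Real.exp x * Real.log (1 + Real.exp x) +
            Real.exp x * (Real.exp x / (1 + Real.exp x))) x :=
        (Real.hasDerivAt_exp x).mul (hL x)
      have hne : Real.exp x * Real.log (1 + Real.exp x) ≠ 0 := by positivity
      have h := (Real.hasDerivAt_log hne).comp x hprod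
      have h2 : HasDerivAt (fun x => Real.log (Real.exp x * Real.log (1 + Real.exp x)))
          (1 + Real.exp x / ((1 + Real.exp x) * Real.log (1 + Real.exp x))) x := by
        refine h.congr_deriv (Eq.symm ?_)
        field_simp
      exact h2.hasDerivWithinAt
    · intro x _
      have he : (0:ℝ) < Real.exp x := Real.exp_pos x
      have hLpos : 0 < Real.log (1 + Real.exp x) := Real.log_pos (by linarith)
      have hD : HasDerivAt (fun x : ℝ => (1 + Real.exp x) * Real.log (1 + Real.exp x))
          (Real.exp x * Real.log (1 + Real.exp x) + Real.exp x) x := by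
        have := ((Real.hasDerivAt_exp x).const_add 1).mul (hL x)
        refine this.congr_deriv (Eq.symm ?_)
        field_simp
      have hDne : (1 + Real.exp x) * Real.log (1 + Real.exp x) ≠ 0 := by positivity
      have hq := (Real.hasDerivAt_exp x).div hD hDne
      have h3 : HasDerivAt
          (fun x => 1 + Real.exp x / ((1 + Real.exp x) * Real.log (1 + Real.exp x)))
          ((Real.exp x * ((1 + Real.exp x) * Real.log (1 + Real.exp x)) -
            Real.exp x * (Real.exp x * Real.log (1 + Real.exp x) + Real.exp x)) /
            ((1 + Real.exp x) * Real.log (1 + Real.exp x)) ^ 2) x :=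
        hq.const_add 1
      exact h3.hasDerivWithinAt
    · intro x _
      have he : (0:ℝ) < Real.exp x := Real.exp_pos x
      have hLle : Real.log (1 + Real.exp x) ≤ Real.exp x := by
        have := Real.log_le_sub_one_of_pos (x := 1 + Real.exp x) (by positivity)
        linarith
      apply div_nonpos_of_nonpos_of_nonneg
      · nlinarith [Real.log_pos (show (1:ℝ) < 1 + Real.exp x by linarith)]
      · positivity
end

section
/- Let σ_A and σ_B be continuous, strictly increasing, concave functions on ℝ_{≥0} with σ_A(0) = σ_B(0) = 0, surjective onto ℝ_{≥0}, and set f = σ_A^{-1}, g = σ_B^{-1}, d_A = f(1), d_B = g(1). Define σ_C(k) = min{σ_A(k_A)·σ_B(k_B) : k_A ≥ d_A, k_B ≥ d_B, k_A·k_B ≥ k} and φ(t) = max{f(t_A)·g(t_B) : t_A, t_B ≥ 1, t_A·t_B = t}. Then σ_C is the inverse of φ on [d_A·d_B, ∞), i.e., σ_C(φ(t)) = t and φ(σ_C(k)) = k for all relevant arguments. -/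
lemma stmt11_inv_facts (σ f : ℝ → ℝ) (hm : StrictMonoOn σ (Set.Ici 0))
    (hcc : ConcaveOn ℝ (Set.Ici 0) σ) (h0 : σ 0 = 0)
    (hsurj : ∀ y ≥ (0:ℝ), ∃ x ≥ (0:ℝ), σ x = y)
    (hinv : ∀ x ≥ (0:ℝ), f (σ x) = x ∧ σ (f x) = x) :
    (∀ y ≥ (0:ℝ), 0 ≤ f y) ∧ (∀ y y' : ℝ, 0 ≤ y → y ≤ y' → f y ≤ f y') ∧ 0 < f 1
      ∧ (∀ c ≥ (1:ℝ), ∀ x ≥ (0:ℝ), c * f x ≤ f (c * x)) := by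
  have hfnn : ∀ y ≥ (0:ℝ), 0 ≤ f y := by
    intro y hy
    obtain ⟨x, hx, rfl⟩ := hsurj y hy
    rw [(hinv x hx).1]; exact hx
  have hσf : ∀ y ≥ (0:ℝ), σ (f y) = y := fun y hy => (hinv y hy).2
  have hmono : ∀ y y' : ℝ, 0 ≤ y → y ≤ y' → f y ≤ f y' := by
    intro y y' hy hyy
    by_contra h
    push_neg at h
    have h2 := hm (hfnn y' (by linarith)) (hfnn y hy) h
    rw [hσf y' (by linarith), hσf y hy] at h2
    linarith
  have hf1 : 0 < f 1 := by
    rcases lt_or_eq_of_le (hfnn 1 zero_le_one) with h | h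
    · exact h
    · exfalso
      have h1 : σ (f 1) = 1 := hσf 1 zero_le_one
      rw [← h, h0] at h1
      norm_num at h1
  refine ⟨hfnn, hmono, hf1, ?_⟩
  intro c hc x hx
  have hc0 : (0:ℝ) < c := by linarith
  have hfx := hfnn x hx
  have hmem1 : (c * f x) ∈ Set.Ici (0:ℝ) := by
    simp only [Set.mem_Ici]; positivity
  have hmem0 : (0:ℝ) ∈ Set.Ici (0:ℝ) := Set.mem_Ici.mpr (le_refl 0)
  have ha : (0:ℝ) ≤ 1/c := by positivity
  have hb : (0:ℝ) ≤ 1 - 1/c := by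
    have : 1/c ≤ 1 := by rw [div_le_one hc0]; exact hc
    linarith
  have hab : 1/c + (1 - 1/c) = 1 := by ring
  have hcon := hcc.2 hmem1 hmem0 ha hb hab
  have harg : (1/c) • (c * f x) + (1 - 1/c) • (0:ℝ) = f x := by
    simp only [smul_eq_mul]; field_simp; ring
  rw [harg, hσf x hx, h0] at hcon
  simp only [smul_eq_mul, mul_zero, add_zero] at hcon
  -- hcon : 1/c * σ (c * f x) ≤ x
  have hkey : σ (c * f x) ≤ c * x := by
    have := mul_le_mul_of_nonneg_left hcon hc0.le
    calc σ (c * f x) = c * (1/c * σ (c * f x)) := by field_simp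
    _ ≤ c * x := this
  by_contra h
  push_neg at h
  have h2 := hm (hfnn (c*x) (by positivity)) hmem1 h
  rw [hσf (c*x) (by positivity)] at h2
  linarith

theorem stmt11 (σA σB f g : ℝ → ℝ)
    (hσAc : ContinuousOn σA (Set.Ici 0)) (hσBc : ContinuousOn σB (Set.Ici 0))
    (hσAm : StrictMonoOn σA (Set.Ici 0)) (hσBm : StrictMonoOn σB (Set.Ici 0))
    (hσAcc : ConcaveOn ℝ (Set.Ici 0) σA) (hσBcc : ConcaveOn ℝ (Set.Ici 0) σB)
    (hσA0 : σA 0 = 0) (hσB0 : σB 0 = 0)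
    (hσAsurj : ∀ y ≥ (0:ℝ), ∃ x ≥ (0:ℝ), σA x = y)
    (hσBsurj : ∀ y ≥ (0:ℝ), ∃ x ≥ (0:ℝ), σB x = y)
    (hfinv : ∀ x ≥ (0:ℝ), f (σA x) = x ∧ σA (f x) = x)
    (hginv : ∀ x ≥ (0:ℝ), g (σB x) = x ∧ σB (g x) = x)
    (σC φ : ℝ → ℝ)
    (hσC : ∀ k, σC k =
      sInf {v | ∃ kA kB : ℝ, f 1 ≤ kA ∧ g 1 ≤ kB ∧ k ≤ kA * kB ∧ v = σA kA * σB kB})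
    (hφ : ∀ t, φ t =
      sSup {v | ∃ tA tB : ℝ, 1 ≤ tA ∧ 1 ≤ tB ∧ tA * tB = t ∧ v = f tA * g tB}) :
    (∀ t ≥ (1:ℝ), σC (φ t) = t) ∧ (∀ k ≥ f 1 * g 1, φ (σC k) = k) := by
  obtain ⟨hfnn, hfmono, hf1, hfsup⟩ :=
    stmt11_inv_facts σA f hσAm hσAcc hσA0 hσAsurj hfinv
  obtain ⟨hgnn, hgmono, hg1, hgsup⟩ :=
    stmt11_inv_facts σB g hσBm hσBcc hσB0 hσBsurj hginv
  have hσAmono : MonotoneOn σA (Set.Ici 0) := hσAm.monotoneOn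
  have hσBmono : MonotoneOn σB (Set.Ici 0) := hσBm.monotoneOn
  have hσAf1 : σA (f 1) = 1 := (hfinv 1 zero_le_one).2
  have hσBg1 : σB (g 1) = 1 := (hginv 1 zero_le_one).2
  -- σA x ≥ 1 for x ≥ f 1, etc.
  have hσA1 : ∀ x, f 1 ≤ x → 1 ≤ σA x := by
    intro x hx
    rw [← hσAf1]
    exact hσAmono (Set.mem_Ici.mpr hf1.le) (Set.mem_Ici.mpr (hf1.le.trans hx)) hx
  have hσB1 : ∀ x, g 1 ≤ x → 1 ≤ σB x := by
    intro x hx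
    rw [← hσBg1]
    exact hσBmono (Set.mem_Ici.mpr hg1.le) (Set.mem_Ici.mpr (hg1.le.trans hx)) hx
  have hσAmono' : ∀ x y : ℝ, 0 ≤ x → x ≤ y → σA x ≤ σA y := fun x y hx hxy =>
    hσAmono (Set.mem_Ici.mpr hx) (Set.mem_Ici.mpr (hx.trans hxy)) hxy
  have hσBmono' : ∀ x y : ℝ, 0 ≤ x → x ≤ y → σB x ≤ σB y := fun x y hx hxy =>
    hσBmono (Set.mem_Ici.mpr hx) (Set.mem_Ici.mpr (hx.trans hxy)) hxy
  have hσAstrict : ∀ x y : ℝ, 0 ≤ x → x < y → σA x < σA y := fun x y hx hxy =>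
    hσAm (Set.mem_Ici.mpr hx) (Set.mem_Ici.mpr (hx.trans hxy.le)) hxy
  have hσBstrict : ∀ x y : ℝ, 0 ≤ x → x < y → σB x < σB y := fun x y hx hxy =>
    hσBm (Set.mem_Ici.mpr hx) (Set.mem_Ici.mpr (hx.trans hxy.le)) hxy
  -- bounded above for the sup set
  have hTub : ∀ t ≥ (1:ℝ), ∀ v ∈ {v | ∃ tA tB : ℝ, 1 ≤ tA ∧ 1 ≤ tB ∧ tA * tB = t ∧
      v = f tA * g tB}, v ≤ f t * g t := by
    rintro t ht v ⟨tA, tB, h1, h2, h3, rfl⟩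
    have htA : tA ≤ t := by nlinarith
    have htB : tB ≤ t := by nlinarith
    have := hfmono tA t (by linarith) htA
    have := hgmono tB t (by linarith) htB
    have := hfnn tA (by linarith)
    have := hgnn t (by linarith)
    nlinarith
  have hTmem : ∀ t ≥ (1:ℝ), ∀ tA tB : ℝ, 1 ≤ tA → 1 ≤ tB → tA * tB = t →
      f tA * g tB ≤ φ t := by
    intro t ht tA tB h1 h2 h3
    rw [hφ]
    exact le_csSup ⟨f t * g t, fun v hv => hTub t ht v hv⟩ ⟨tA, tB, h1, h2, h3, rfl⟩
  have hφlb : ∀ t ≥ (1:ℝ), f 1 * g t ≤ φ t := by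
    intro t ht
    exact hTmem t ht 1 t le_rfl ht (one_mul t)
  have hφpos : ∀ t ≥ (1:ℝ), f 1 * g 1 ≤ φ t := by
    intro t ht
    have := hφlb t ht
    have := hgmono 1 t zero_le_one ht
    nlinarith
  -- growth of φ
  have hgrow : ∀ t ≥ (1:ℝ), ∀ c ≥ (1:ℝ), c * φ t ≤ φ (c * t) := by
    intro t ht c hc
    have hct : (1:ℝ) ≤ c * t := by nlinarith
    have hφctnn : 0 ≤ φ (c * t) := by
      have := hφpos (c*t) hct
      nlinarith
    have hc0 : (0:ℝ) < c := by linarith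
    have hb : ∀ v ∈ {v | ∃ tA tB : ℝ, 1 ≤ tA ∧ 1 ≤ tB ∧ tA * tB = t ∧
        v = f tA * g tB}, v ≤ φ (c * t) / c := by
      rintro v ⟨tA, tB, h1, h2, h3, rfl⟩
      have hmem : f (c * tA) * g tB ≤ φ (c * t) := by
        apply hTmem (c*t) hct (c*tA) tB (by nlinarith) h2 (by rw [← h3]; ring)
      have hsup := hfsup c hc tA (by linarith)
      have hgtB := hgnn tB (by linarith)
      rw [le_div_iff₀ hc0]
      nlinarith
    have : φ t ≤ φ (c * t) / c := by
      rw [hφ]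
      exact Real.sSup_le hb (by positivity)
    rw [← le_div_iff₀' hc0]
    exact this
  -- the key construction for part 2
  have key2 : ∀ k ≥ f 1 * g 1, φ (σC k) = k ∧ 1 ≤ σC k := by
    intro k hk
    have hfg1 : 0 < f 1 * g 1 := by positivity
    have hk0 : 0 < k := lt_of_lt_of_le hfg1 hk
    have hIne : f 1 ≤ k / g 1 := by rw [le_div_iff₀ hg1]; exact hk
    -- minimize σA x * σB (k/x) on [f 1, k / g 1]
    have hcont : ContinuousOn (fun x => σA x * σB (k / x)) (Set.Icc (f 1) (k / g 1)) := by
      apply ContinuousOn.mul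
      · exact hσAc.mono (fun x hx => Set.mem_Ici.mpr (hf1.le.trans hx.1))
      · apply hσBc.comp
        · apply ContinuousOn.div continuousOn_const continuousOn_id
          intro x hx
          have : 0 < x := lt_of_lt_of_le hf1 hx.1
          simp only [id]
          positivity
        · intro x hx
          have hx0 : 0 < x := lt_of_lt_of_le hf1 hx.1
          exact Set.mem_Ici.mpr (by positivity)
    obtain ⟨xs, hxsI, hxsmin⟩ := isCompact_Icc.exists_isMinOn ⟨f 1, le_rfl, hIne⟩ hcont
    have hxs1 : f 1 ≤ xs := hxsI.1
    have hxs0 : 0 < xs := lt_of_lt_of_le hf1 hxs1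
    have hxsg : g 1 ≤ k / xs := by
      rw [le_div_iff₀ hxs0]
      have := hxsI.2
      rw [le_div_iff₀ hg1] at this
      linarith
    have hxsk : xs * (k / xs) = k := by field_simp
    set ts := σA xs * σB (k / xs) with hts
    have hts1 : 1 ≤ ts := by
      have h1 := hσA1 xs hxs1
      have h2 := hσB1 (k/xs) hxsg
      nlinarith
    -- lower bound over the inf set
    have hlow : ∀ v ∈ {v | ∃ kA kB : ℝ, f 1 ≤ kA ∧ g 1 ≤ kB ∧ k ≤ kA * kB ∧
        v = σA kA * σB kB}, ts ≤ v := by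
      rintro v ⟨kA, kB, h1, h2, h3, rfl⟩
      have hkA0 : 0 < kA := lt_of_lt_of_le hf1 h1
      have hkB0 : 0 < kB := lt_of_lt_of_le hg1 h2
      set kA' := max (f 1) (k / kB) with hkA'
      have hA1 : f 1 ≤ kA' := le_max_left _ _
      have hA0 : 0 < kA' := lt_of_lt_of_le hf1 hA1
      have hA2 : kA' ≤ k / g 1 := by
        apply max_le hIne
        exact div_le_div_of_nonneg_left hk0.le hg1 h2
      have hAle : kA' ≤ kA := by
        apply max_le h1
        rw [div_le_iff₀ hkB0]
        exact h3
      have hBg : g 1 ≤ k / kA' := by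
        rw [le_div_iff₀ hA0]
        rw [le_div_iff₀ hg1] at hA2
        linarith
      have hBle : k / kA' ≤ kB := by
        rw [div_le_iff₀ hA0]
        have : k / kB ≤ kA' := le_max_right _ _
        rw [div_le_iff₀ hkB0] at this
        linarith [this]
      have hmin := hxsmin ⟨hA1, hA2⟩
      simp only [Set.mem_setOf_eq] at hmin
      have hstep : σA kA' * σB (k / kA') ≤ σA kA * σB kB := by
        have e1 := hσAmono' kA' kA hA0.le hAle
        have e2 := hσBmono' (k/kA') kB (by positivity) hBle
        have e3 : (1:ℝ) ≤ σB (k/kA') := hσB1 _ hBg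
        have e4 : (1:ℝ) ≤ σA kA := hσA1 _ h1
        nlinarith
      calc ts ≤ σA kA' * σB (k / kA') := hmin
      _ ≤ σA kA * σB kB := hstep
    have hmemS : ts ∈ {v | ∃ kA kB : ℝ, f 1 ≤ kA ∧ g 1 ≤ kB ∧ k ≤ kA * kB ∧
        v = σA kA * σB kB} := ⟨xs, k/xs, hxs1, hxsg, by rw [hxsk], rfl⟩
    have hσCk : σC k = ts := by
      rw [hσC]
      exact le_antisymm (csInf_le ⟨ts, hlow⟩ hmemS) (le_csInf ⟨ts, hmemS⟩ hlow)
    -- now show φ ts = k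
    have hub : ∀ v ∈ {v | ∃ tA tB : ℝ, 1 ≤ tA ∧ 1 ≤ tB ∧ tA * tB = ts ∧
        v = f tA * g tB}, v ≤ k := by
      rintro v ⟨tA, tB, h1, h2, h3, rfl⟩
      by_contra hv
      push_neg at hv
      set kA := f tA with hkA
      set kB := g tB with hkB
      have hkAf1 : f 1 ≤ kA := hfmono 1 tA zero_le_one h1
      have hkBg1 : g 1 ≤ kB := hgmono 1 tB zero_le_one h2
      have hkA0 : 0 < kA := lt_of_lt_of_le hf1 hkAf1
      have hkB0 : 0 < kB := lt_of_lt_of_le hg1 hkBg1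
      have hσAkA : σA kA = tA := (hfinv tA (by linarith)).2
      have hσBkB : σB kB = tB := (hginv tB (by linarith)).2
      set kA'' := max (f 1) (k / kB) with hkA''
      have hA1 : f 1 ≤ kA'' := le_max_left _ _
      have hA0 : 0 < kA'' := lt_of_lt_of_le hf1 hA1
      have hA2 : kA'' ≤ k / g 1 := by
        apply max_le hIne
        exact div_le_div_of_nonneg_left hk0.le hg1 hkBg1
      have hAle : kA'' ≤ kA := by
        apply max_le hkAf1
        rw [div_le_iff₀ hkB0]
        exact hv.le
      have hBg : g 1 ≤ k / kA'' := by
        rw [le_div_iff₀ hA0]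
        rw [le_div_iff₀ hg1] at hA2
        linarith
      have hBle : k / kA'' ≤ kB := by
        rw [div_le_iff₀ hA0]
        have : k / kB ≤ kA'' := le_max_right _ _
        rw [div_le_iff₀ hkB0] at this
        linarith
      have hprod : kA'' * (k / kA'') = k := by field_simp
      have hvmem := hlow (σA kA'' * σB (k / kA''))
        ⟨kA'', k/kA'', hA1, hBg, by rw [hprod], rfl⟩
      -- strict decrease
      have hval : σA kA * σB kB = ts := by rw [hσAkA, hσBkB, h3]
      have hstrict : σA kA'' * σB (k / kA'') < ts := by
        rcases lt_or_eq_of_le hAle with hlt | heq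
        · have e1 := hσAstrict kA'' kA hA0.le hlt
          have e2 := hσBmono' (k/kA'') kB (by positivity) hBle
          have e3 : (0:ℝ) < σB (k/kA'') := lt_of_lt_of_le one_pos (hσB1 _ hBg)
          have e4 : (0:ℝ) < σA kA := lt_of_lt_of_le one_pos (hσA1 kA hkAf1)
          calc σA kA'' * σB (k / kA'') < σA kA * σB (k / kA'') :=
                mul_lt_mul_of_pos_right e1 e3
          _ ≤ σA kA * σB kB := mul_le_mul_of_nonneg_left e2 e4.le
          _ = ts := hval
        · have hBlt : k / kA'' < kB := by
            rcases lt_or_eq_of_le hBle with h | h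
            · exact h
            · exfalso
              rw [heq] at hprod h
              rw [h] at hprod
              linarith
          have e1 := hσBstrict (k/kA'') kB (by positivity) hBlt
          have e3 : (0:ℝ) < σA kA'' := lt_of_lt_of_le one_pos (hσA1 kA'' hA1)
          calc σA kA'' * σB (k / kA'') < σA kA'' * σB kB :=
                mul_lt_mul_of_pos_left e1 e3
          _ = ts := by rw [heq]; exact hval
      linarith
    have hmemT : k ∈ {v | ∃ tA tB : ℝ, 1 ≤ tA ∧ 1 ≤ tB ∧ tA * tB = ts ∧
        v = f tA * g tB} := by
      refine ⟨σA xs, σB (k/xs), hσA1 xs hxs1, hσB1 (k/xs) hxsg, rfl, ?_⟩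
      rw [(hfinv xs hxs0.le).1, (hginv (k/xs) (by positivity)).1, hxsk]
    have hφts : φ ts = k := by
      rw [hφ]
      exact le_antisymm (Real.sSup_le hub hk0.le) (le_csSup ⟨k, hub⟩ hmemT)
    rw [hσCk]
    exact ⟨hφts, hts1⟩
  refine ⟨?_, fun k hk => (key2 k hk).1⟩
  intro t ht
  have hkge : f 1 * g 1 ≤ φ t := hφpos t ht
  obtain ⟨hEq, h1'⟩ := key2 (φ t) hkge
  have hφt0 : 0 < φ t := lt_of_lt_of_le (by positivity) hkge
  have hlower : t ≤ σC (φ t) := by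
    rw [hσC]
    apply le_csInf
    · refine ⟨σA (max (f 1) (φ t / g 1)) * σB (g 1), max (f 1) (φ t / g 1), g 1,
        le_max_left _ _, le_rfl, ?_, rfl⟩
      have e1 : φ t / g 1 * g 1 = φ t := div_mul_cancel₀ _ hg1.ne'
      have e2 : φ t / g 1 ≤ max (f 1) (φ t / g 1) := le_max_right _ _
      calc φ t = φ t / g 1 * g 1 := e1.symm
      _ ≤ max (f 1) (φ t / g 1) * g 1 := mul_le_mul_of_nonneg_right e2 hg1.le
    · rintro v ⟨kA, kB, h1, h2, h3, rfl⟩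
      by_contra hvt
      push_neg at hvt
      have hsA : 1 ≤ σA kA := hσA1 kA h1
      have hsB : 1 ≤ σB kB := hσB1 kB h2
      have hs0 : (0:ℝ) < σA kA * σB kB := by nlinarith
      set c := t / (σA kA * σB kB) with hc
      have hc1 : 1 < c := (one_lt_div hs0).mpr hvt
      have hcA1 : 1 ≤ c * σA kA := by nlinarith
      have hprodt : (c * σA kA) * σB kB = t := by
        rw [hc]; field_simp
      have hmem : f (c * σA kA) * g (σB kB) ≤ φ t :=
        hTmem t ht (c * σA kA) (σB kB) hcA1 hsB hprodt
      have hsup := hfsup c hc1.le (σA kA) (by linarith)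
      rw [(hfinv kA (le_trans hf1.le h1)).1] at hsup
      have hgeq : g (σB kB) = kB := (hginv kB (le_trans hg1.le h2)).1
      rw [hgeq] at hmem
      have hkB0 : (0:ℝ) < kB := lt_of_lt_of_le hg1 h2
      have : c * kA * kB ≤ f (c * σA kA) * kB :=
        mul_le_mul_of_nonneg_right hsup hkB0.le
      nlinarith
  have hupper : σC (φ t) ≤ t := by
    by_contra h
    push_neg at h
    have ht0 : (0:ℝ) < t := by linarith
    have hc1 : 1 < σC (φ t) / t := (one_lt_div ht0).mpr h
    have hg2 := hgrow t ht (σC (φ t) / t) hc1.le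
    have hct : σC (φ t) / t * t = σC (φ t) := div_mul_cancel₀ _ ht0.ne'
    rw [hct, hEq] at hg2
    nlinarith
  linarith
end

section
/- Let f, g : ℝ_{≥0} → ℝ_{≥0} be smooth, strictly increasing, convex with f(0) = g(0) = 0 and fixed r_A, r_B > 0. Assume x ↦ f(r_A) − f(r_A − x) is log-log concave on (0, r_A) and x ↦ g(r_B) − g(r_B − x) is log-log concave on (0, r_B). Then for any c with 0 < c < r_A·r_B, the function h(x) = (f(r_A) − f(x))·(g(r_B) − g(r_B − c/(r_A − x))) on [0, r_A − c/r_B] attains its minimum at an endpoint x = 0 or x = r_A − c/r_B. -/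
open Set Filter Topology

lemma min_le_of_concaveOn_Ioo {φ : ℝ → ℝ} {a b : ℝ}
    (hcont : ContinuousOn φ (Set.Icc a b))
    (hconc : ConcaveOn ℝ (Set.Ioo a b) φ) :
    ∀ x ∈ Set.Icc a b, min (φ a) (φ b) ≤ φ x := by
  intro x hx
  rcases eq_or_lt_of_le hx.1 with h1 | h1
  · rw [← h1]; exact min_le_left _ _
  rcases eq_or_lt_of_le hx.2 with h2 | h2
  · rw [h2]; exact min_le_right _ _
  have hab : a < b := h1.trans h2
  have hδ : (0:ℝ) < min (x - a) (b - x) := lt_min (by linarith) (by linarith)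
  have key : ∀ ε ∈ Set.Ioo (0:ℝ) (min (x - a) (b - x)),
      min (φ (a + ε)) (φ (b - ε)) ≤ φ x := by
    intro ε hε
    have hε1 : a + ε < x := by have := hε.2.trans_le (min_le_left _ _); linarith
    have hε2 : x < b - ε := by have := hε.2.trans_le (min_le_right _ _); linarith
    have hma : a + ε ∈ Set.Ioo a b := ⟨by linarith [hε.1], by linarith⟩
    have hmb : b - ε ∈ Set.Ioo a b := ⟨by linarith, by linarith [hε.1]⟩
    exact hconc.min_le_of_mem_segment hma hmb
      (by rw [segment_eq_Icc (by linarith : a + ε ≤ b - ε)]; exact ⟨hε1.le, hε2.le⟩)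
  have ta : Tendsto (fun ε : ℝ => φ (a + ε)) (𝓝[>] 0) (𝓝 (φ a)) := by
    have hca : ContinuousWithinAt φ (Set.Icc a b) a := hcont a ⟨le_refl a, hab.le⟩
    refine hca.tendsto.comp ?_
    rw [tendsto_nhdsWithin_iff]
    constructor
    · have : Tendsto (fun ε : ℝ => a + ε) (𝓝 0) (𝓝 (a + 0)) :=
        (continuous_const.add continuous_id).tendsto 0
      simpa using this.mono_left nhdsWithin_le_nhds
    · filter_upwards [Ioo_mem_nhdsGT_of_mem (Set.mem_Ico.2 ⟨le_refl (0:ℝ), by linarith⟩)]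
        with ε hε
      have := hε.2.trans_le (min_le_left (x-a) (b-x))
      exact ⟨by linarith [hε.1], by linarith⟩
  have tb : Tendsto (fun ε : ℝ => φ (b - ε)) (𝓝[>] 0) (𝓝 (φ b)) := by
    have hcb : ContinuousWithinAt φ (Set.Icc a b) b := hcont b ⟨hab.le, le_refl b⟩
    refine hcb.tendsto.comp ?_
    rw [tendsto_nhdsWithin_iff]
    constructor
    · have : Tendsto (fun ε : ℝ => b - ε) (𝓝 0) (𝓝 (b - 0)) :=
        (continuous_const.sub continuous_id).tendsto 0
      simpa using this.mono_left nhdsWithin_le_nhds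
    · filter_upwards [Ioo_mem_nhdsGT_of_mem (Set.mem_Ico.2 ⟨le_refl (0:ℝ), by linarith⟩)]
        with ε hε
      have := hε.2.trans_le (min_le_right (x-a) (b-x))
      exact ⟨by linarith, by linarith [hε.1]⟩
  refine le_of_tendsto (ta.min tb) ?_
  filter_upwards [Ioo_mem_nhdsGT_of_mem (Set.mem_Ico.2 ⟨le_refl (0:ℝ), hδ⟩)] with ε hε
  exact key ε hε

theorem stmt18 (f g : ℝ → ℝ)
    (hf : ContDiffOn ℝ (⊤ : ℕ∞) f (Set.Ici 0)) (hg : ContDiffOn ℝ (⊤ : ℕ∞) g (Set.Ici 0))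
    (hfm : StrictMonoOn f (Set.Ici 0)) (hgm : StrictMonoOn g (Set.Ici 0))
    (hfc : ConvexOn ℝ (Set.Ici 0) f) (hgc : ConvexOn ℝ (Set.Ici 0) g)
    (hf0 : f 0 = 0) (hg0 : g 0 = 0)
    (rA rB : ℝ) (hrA : 0 < rA) (hrB : 0 < rB)
    (hfllc : ConcaveOn ℝ (Set.Iio (Real.log rA))
      (fun u => Real.log (f rA - f (rA - Real.exp u))))
    (hgllc : ConcaveOn ℝ (Set.Iio (Real.log rB))
      (fun u => Real.log (g rB - g (rB - Real.exp u))))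
    (c : ℝ) (hc0 : 0 < c) (hc : c < rA * rB) :
    ∀ x ∈ Set.Icc 0 (rA - c / rB),
      min ((f rA - f 0) * (g rB - g (rB - c / (rA - 0))))
          ((f rA - f (rA - c / rB)) * (g rB - g (rB - c / (rA - (rA - c / rB))))) ≤
        (f rA - f x) * (g rB - g (rB - c / (rA - x))) := by
  have hfC : ContinuousOn f (Set.Ici 0) := hf.continuousOn
  have hgC : ContinuousOn g (Set.Ici 0) := hg.continuousOn
  set e := rA - c / rB with he
  have hcrB : 0 < c / rB := div_pos hc0 hrB
  have hcrBlt : c / rB < rA := (div_lt_iff₀ hrB).2 (by linarith)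
  have he0 : 0 < e := by simp only [he]; linarith
  set a' := Real.log (c / rB) with ha'
  set b' := Real.log rA with hb'
  have ha'eq : a' = Real.log c - Real.log rB := by
    rw [ha', Real.log_div hc0.ne' hrB.ne']
  have ha'b' : a' < b' := Real.log_lt_log hcrB hcrBlt
  -- basic facts for y in the interval
  have hry : ∀ y ∈ Set.Icc 0 e, c / rB ≤ rA - y := by
    intro y hy; have := hy.2; simp only [he] at this ⊢; linarith
  have hry0 : ∀ y ∈ Set.Icc 0 e, 0 < rA - y := fun y hy => lt_of_lt_of_le hcrB (hry y hy)
  have Pf : ∀ y ∈ Set.Icc 0 e, 0 < f rA - f y := by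
    intro y hy
    exact sub_pos.2 (hfm hy.1 hrA.le (by linarith [hry0 y hy]))
  have hargmem : ∀ y ∈ Set.Icc 0 e, rB - c / (rA - y) ∈ Set.Ici (0:ℝ) := by
    intro y hy
    have h1 : c ≤ rB * (rA - y) := by
      have := (div_le_iff₀ hrB).1 (hry y hy); linarith [this]
    have : c / (rA - y) ≤ rB := (div_le_iff₀ (hry0 y hy)).2 (by linarith)
    simpa [Set.mem_Ici] using by linarith
  have Pg : ∀ y ∈ Set.Icc 0 e, 0 < g rB - g (rB - c / (rA - y)) := by
    intro y hy
    refine sub_pos.2 (hgm (hargmem y hy) hrB.le ?_)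
    have := div_pos hc0 (hry0 y hy); linarith
  -- the concave substitution
  set Φ : ℝ → ℝ := fun u => Real.log (f rA - f (rA - Real.exp u)) +
      Real.log (g rB - g (rB - Real.exp (Real.log c - u))) with hΦ
  have hΦval : ∀ y ∈ Set.Icc 0 e,
      Real.exp (Φ (Real.log (rA - y))) =
        (f rA - f y) * (g rB - g (rB - c / (rA - y))) := by
    intro y hy
    have h1 : Real.exp (Real.log (rA - y)) = rA - y := Real.exp_log (hry0 y hy)
    have h2 : Real.exp (Real.log c - Real.log (rA - y)) = c / (rA - y) := by
      rw [Real.exp_sub, Real.exp_log hc0, Real.exp_log (hry0 y hy)]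
    have h3 : Φ (Real.log (rA - y)) =
        Real.log (f rA - f y) + Real.log (g rB - g (rB - c / (rA - y))) := by
      simp only [hΦ]; rw [h1, h2, sub_sub_cancel]
    rw [h3, Real.exp_add, Real.exp_log (Pf y hy), Real.exp_log (Pg y hy)]
  have hmap : ∀ y ∈ Set.Icc 0 e, Real.log (rA - y) ∈ Set.Icc a' b' := by
    intro y hy
    exact ⟨Real.log_le_log hcrB (hry y hy),
      Real.log_le_log (hry0 y hy) (by linarith [hy.1])⟩
  -- concavity of Φ on Ioo a' b'
  have hGA : ConcaveOn ℝ (Set.Ioi a')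
      (fun u => Real.log (g rB - g (rB - Real.exp (Real.log c - u)))) := by
    have hA := hgllc.comp_affineMap (AffineMap.const ℝ ℝ (Real.log c) - AffineMap.id ℝ ℝ)
    have hpre : (AffineMap.const ℝ ℝ (Real.log c) - AffineMap.id ℝ ℝ) ⁻¹'
        (Set.Iio (Real.log rB)) = Set.Ioi a' := by
      ext u
      simp only [Set.mem_preimage, Set.mem_Iio, Set.mem_Ioi, AffineMap.coe_sub,
        AffineMap.coe_const, AffineMap.coe_id, Pi.sub_apply, Function.const_apply, id_eq, ha'eq]
      constructor <;> intro h <;> linarith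
    rw [hpre] at hA
    exact hA
  have hΦconc : ConcaveOn ℝ (Set.Ioo a' b') Φ :=
    (hfllc.subset (fun u hu => hu.2) (convex_Ioo _ _)).add
      (hGA.subset (fun u hu => hu.1) (convex_Ioo _ _))
  -- continuity of Φ on Icc a' b'
  have hΦcont : ContinuousOn Φ (Set.Icc a' b') := by
    have m1 : Set.MapsTo (fun u => rA - Real.exp u) (Set.Icc a' b') (Set.Ici 0) := by
      intro u hu
      have : Real.exp u ≤ rA := by
        calc Real.exp u ≤ Real.exp b' := Real.exp_le_exp.2 hu.2
          _ = rA := Real.exp_log hrA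
      simp only [Set.mem_Ici]; linarith
    have m2 : Set.MapsTo (fun u => rB - Real.exp (Real.log c - u))
        (Set.Icc a' b') (Set.Ici 0) := by
      intro u hu
      have : Real.exp (Real.log c - u) ≤ rB := by
        calc Real.exp (Real.log c - u) ≤ Real.exp (Real.log rB) := by
              apply Real.exp_le_exp.2; rw [ha'eq] at hu; linarith [hu.1]
          _ = rB := Real.exp_log hrB
      simp only [Set.mem_Ici]; linarith
    have c1 : ContinuousOn (fun u => f rA - f (rA - Real.exp u)) (Set.Icc a' b') :=
      continuousOn_const.sub (hfC.comp
        ((continuous_const.sub Real.continuous_exp).continuousOn) m1)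
    have c2 : ContinuousOn (fun u => g rB - g (rB - Real.exp (Real.log c - u)))
        (Set.Icc a' b') :=
      continuousOn_const.sub (hgC.comp
        ((continuous_const.sub
          (Real.continuous_exp.comp (continuous_const.sub continuous_id))).continuousOn) m2)
    have p1 : ∀ u ∈ Set.Icc a' b', f rA - f (rA - Real.exp u) ≠ 0 := by
      intro u hu
      exact ne_of_gt (sub_pos.2 (hfm (m1 hu) hrA.le (by simpa using sub_lt_self rA (Real.exp_pos u))))
    have p2 : ∀ u ∈ Set.Icc a' b', g rB - g (rB - Real.exp (Real.log c - u)) ≠ 0 := by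
      intro u hu
      exact ne_of_gt (sub_pos.2 (hgm (m2 hu) hrB.le
        (by simpa using sub_lt_self rB (Real.exp_pos (Real.log c - u)))))
    exact (c1.log p1).add (c2.log p2)
  -- assemble
  intro x hx
  have h0m : (0:ℝ) ∈ Set.Icc 0 e := ⟨le_refl 0, he0.le⟩
  have hem : e ∈ Set.Icc 0 e := ⟨he0.le, le_refl e⟩
  have key := min_le_of_concaveOn_Ioo hΦcont hΦconc (Real.log (rA - x)) (hmap x hx)
  have E0 : (f rA - f 0) * (g rB - g (rB - c / (rA - 0))) = Real.exp (Φ b') := by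
    rw [← hΦval 0 h0m]; norm_num
    rw [hb']
  have Ee : (f rA - f e) * (g rB - g (rB - c / (rA - e))) = Real.exp (Φ a') := by
    rw [← hΦval e hem]
    have harg : Real.log (rA - e) = a' := by rw [ha']; congr 1; rw [he]; ring
    rw [harg]
  rw [E0, Ee, ← hΦval x hx]
  calc min (Real.exp (Φ b')) (Real.exp (Φ a'))
      = Real.exp (min (Φ b') (Φ a')) := (Real.exp_strictMono.monotone.map_min).symm
    _ ≤ Real.exp (Φ (Real.log (rA - x))) := Real.exp_le_exp.2 (by rw [min_comm]; exact key)
end
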